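/- Let a control-affine system be locally accessible on a positively invariant set M ⊂ ℝ^d and let K ⊂ M be compact. Then there are at most finitely many invariant control sets C with C ∩ K ≠ ∅. -/

import Mathlib

/-! Solutions depend Lipschitz-continuously on the initial value, uniformly in the control
(Grönwall), so every point reachable from a point of `closure C` lies in `closure C`.
Near `c ∈ M`, local accessibility gives a point `b` reachable from `c` and a point `u`,
also reachable from `c`, in the interior of the set of points controllable to `b`; by
continuity, every point near `c` can be steered into that interior, so `b` lies in the
closure of every invariant control set meeting a neighbourhood of `c`. Two invariant control
sets whose closures share the locally accessible point `b` both contain points of the open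
set reachable from `b`, hence have equal closures, hence coincide by maximality. Thus every
point of `K` has a neighbourhood meeting at most one invariant control set, and compactness
of `K` finishes the proof. -/

open MeasureTheory Set Topology

/-- A control-affine system `ẋ = f₀(x) + ∑ vᵢ(t) fᵢ(x)` on `ℝ^d` with Lipschitz
continuous vector fields and compact control range `V ⊆ ℝ^m`.  The (unique, global)
solutions are bundled as the data `φ` together with their defining properties. -/
structure CAS (d m : ℕ) where
  /-- the drift vector field -/
  f0 : (Fin d → ℝ) → (Fin d → ℝ)
  /-- the control vector fields -/
  f : Fin m → (Fin d → ℝ) → (Fin d → ℝ)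
  /-- the control range -/
  V : Set (Fin m → ℝ)
  lip0 : ∃ K, LipschitzWith K f0
  lip : ∀ i, ∃ K, LipschitzWith K (f i)
  V_compact : IsCompact V
  /-- the solution map: `φ x v t` is the solution at time `t` starting at `x` with control `v` -/
  φ : (Fin d → ℝ) → (ℝ → (Fin m → ℝ)) → ℝ → (Fin d → ℝ)
  φ_init : ∀ x v, φ x v 0 = x
  φ_cont : ∀ x v, Continuous (φ x v)
  /-- solutions are (Carathéodory) solutions of the ODE -/
  φ_sol : ∀ (x : Fin d → ℝ) (v : ℝ → (Fin m → ℝ)), Measurable v → (∀ t, v t ∈ V) →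
    ∀ t, 0 ≤ t →
      φ x v t = x + ∫ s in (0:ℝ)..t, (f0 (φ x v s) + ∑ i, v s i • f (i) (φ x v s))

namespace CAS

variable {d m : ℕ}

/-- the set of admissible controls -/
def ctrl (S : CAS d m) : Set (ℝ → (Fin m → ℝ)) :=
  {v | Measurable v ∧ ∀ t, v t ∈ S.V}

/-- a control is piecewise constant if it has only finitely many discontinuities on
every bounded interval, i.e. it is constant between the members of a sequence of
switching times tending to infinity -/
def PiecewiseConst (v : ℝ → (Fin m → ℝ)) : Prop :=
  ∃ τ : ℕ → ℝ, τ 0 = 0 ∧ StrictMono τ ∧ Filter.Tendsto τ Filter.atTop Filter.atTop ∧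
    ∀ n, ∀ t ∈ Ico (τ n) (τ (n + 1)), v t = v (τ n)

/-- the reachable set from `x` -/
def reach (S : CAS d m) (x : Fin d → ℝ) : Set (Fin d → ℝ) :=
  {y | ∃ v ∈ S.ctrl, ∃ t ≥ (0:ℝ), S.φ x v t = y}

/-- the set reachable from `x` with piecewise constant controls -/
def reachPC (S : CAS d m) (x : Fin d → ℝ) : Set (Fin d → ℝ) :=
  {y | ∃ v ∈ S.ctrl, PiecewiseConst v ∧ ∃ t ≥ (0:ℝ), S.φ x v t = y}

/-- the reachable set from `x` up to time `T` -/
def reachLe (S : CAS d m) (T : ℝ) (x : Fin d → ℝ) : Set (Fin d → ℝ) :=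
  {y | ∃ v ∈ S.ctrl, ∃ t ∈ Icc (0:ℝ) T, S.φ x v t = y}

/-- the controllable set to `x` up to time `T` -/
def contrLe (S : CAS d m) (T : ℝ) (x : Fin d → ℝ) : Set (Fin d → ℝ) :=
  {y | ∃ v ∈ S.ctrl, ∃ t ∈ Icc (0:ℝ) T, S.φ y v t = x}

/-- positive invariance of a set -/
def posInv (S : CAS d m) (M : Set (Fin d → ℝ)) : Prop :=
  ∀ x ∈ M, ∀ v ∈ S.ctrl, ∀ t ≥ (0:ℝ), S.φ x v t ∈ M

/-- invariance of a set -/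
def inv (S : CAS d m) (M : Set (Fin d → ℝ)) : Prop :=
  ∀ t ≥ (0:ℝ), {y | ∃ x ∈ M, ∃ v ∈ S.ctrl, S.φ x v t = y} = M

/-- the two defining properties (i) controlled invariance and (ii) approximate
reachability of a control set -/
def controlSetProps (S : CAS d m) (D : Set (Fin d → ℝ)) : Prop :=
  (∀ x ∈ D, ∃ v ∈ S.ctrl, ∀ t ≥ (0:ℝ), S.φ x v t ∈ D) ∧
  (∀ x ∈ D, D ⊆ closure (S.reach x))

/-- a control set: a maximal nonempty set with the properties `controlSetProps` -/
def isControlSet (S : CAS d m) (D : Set (Fin d → ℝ)) : Prop :=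
  D.Nonempty ∧ S.controlSetProps D ∧
  ∀ D', D ⊆ D' → S.controlSetProps D' → D' = D

/-- an invariant control set -/
def isInvControlSet (S : CAS d m) (C : Set (Fin d → ℝ)) : Prop :=
  S.isControlSet C ∧ ∀ x ∈ C, closure C = closure (S.reach x)

/-- local accessibility at a point -/
def locAccAt (S : CAS d m) (x : Fin d → ℝ) : Prop :=
  ∀ T > (0:ℝ), ∀ N ∈ 𝓝 x,
    (interior (S.reachLe T x) ∩ N).Nonempty ∧ (interior (S.contrLe T x) ∩ N).Nonempty

/-- local accessibility on a set -/
def locAccOn (S : CAS d m) (M : Set (Fin d → ℝ)) : Prop :=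
  ∀ x ∈ M, S.locAccAt x

/-- the domain of attraction of a set -/
def domAttr (S : CAS d m) (C : Set (Fin d → ℝ)) : Set (Fin d → ℝ) :=
  {x | (closure (S.reach x) ∩ C).Nonempty}

/-- the strict domain of attraction of an invariant control set -/
def domAttrStrict (S : CAS d m) (C : Set (Fin d → ℝ)) : Set (Fin d → ℝ) :=
  {x | (closure (S.reach x) ∩ C).Nonempty ∧
    ∀ C', S.isInvControlSet C' → (closure (S.reach x) ∩ C').Nonempty → C' = C}

end CAS

theorem le_mul_exp_of_le_add_integral {u : ℝ → ℝ} {δ L T : ℝ} (hu : Continuous u)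
    (hL : 0 ≤ L) (hT : 0 ≤ T) (h : ∀ t ∈ Icc 0 T, u t ≤ δ + ∫ s in (0:ℝ)..t, L * u s) :
    u T ≤ δ * Real.exp (L * T) := by
  set A : ℝ → ℝ := fun t => δ + ∫ s in (0:ℝ)..t, L * u s
  have hA : ∀ t, HasDerivAt A (L * u t) t := fun t =>
    ((continuous_const.mul hu).integral_hasStrictDerivAt 0 t).hasDerivAt.const_add δ
  have hAT : A T ≤ gronwallBound δ L 0 (T - 0) :=
    le_gronwallBound_of_liminf_deriv_right_le
      (continuous_iff_continuousAt.2 fun t => (hA t).continuousAt).continuousOn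
      (fun t _ r hr => (hA t).hasDerivWithinAt.liminf_right_slope_le hr)
      (by simp [A])
      (fun t ht => by
        rw [add_zero]; exact mul_le_mul_of_nonneg_left (h t (Ico_subset_Icc_self ht)) hL)
      T ⟨hT, le_rfl⟩
  rw [sub_zero, gronwallBound_ε0] at hAT
  exact (h T ⟨hT, le_rfl⟩).trans hAT

namespace CAS

variable {d m : ℕ} (S : CAS d m)

def field (v : ℝ → Fin m → ℝ) (s : ℝ) (x : Fin d → ℝ) : Fin d → ℝ :=
  S.f0 x + ∑ i, v s i • S.f i x

theorem φ_eq_add_integral {v : ℝ → Fin m → ℝ} (hv : v ∈ S.ctrl) (x : Fin d → ℝ) {t : ℝ}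
    (ht : 0 ≤ t) : S.φ x v t = x + ∫ s in (0:ℝ)..t, S.field v s (S.φ x v s) :=
  S.φ_sol x v hv.1 hv.2 t ht

theorem exists_norm_le_of_mem_ctrl :
    ∃ R, 0 ≤ R ∧ ∀ v ∈ S.ctrl, ∀ s i, ‖v s i‖ ≤ R := by
  obtain ⟨R, hR, hV⟩ := S.V_compact.isBounded.exists_pos_norm_le
  exact ⟨R, hR.le, fun v hv s i => (norm_le_pi_norm (v s) i).trans (hV _ (hv.2 s))⟩

theorem exists_dist_field_le :
    ∃ L, 0 ≤ L ∧
      ∀ v ∈ S.ctrl, ∀ s x y, dist (S.field v s x) (S.field v s y) ≤ L * dist x y := by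
  obtain ⟨K₀, hK₀⟩ := S.lip0
  choose K hK using S.lip
  obtain ⟨R, hR, hv⟩ := S.exists_norm_le_of_mem_ctrl
  refine ⟨K₀ + R * ∑ i, (K i : ℝ), by positivity, fun v hv' s x y => ?_⟩
  have hsmul : ∀ i, dist (v s i • S.f i x) (v s i • S.f i y) ≤ R * K i * dist x y := fun i =>
    calc dist (v s i • S.f i x) (v s i • S.f i y) = ‖v s i‖ * dist (S.f i x) (S.f i y) :=
          dist_smul₀ _ _ _
      _ ≤ R * (K i * dist x y) := by
          gcongr
          · exact hv v hv' s i
          · exact (hK i).dist_le_mul x y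
      _ = R * K i * dist x y := by ring
  calc dist (S.field v s x) (S.field v s y)
      ≤ dist (S.f0 x) (S.f0 y) + ∑ i, dist (v s i • S.f i x) (v s i • S.f i y) :=
        (dist_add_add_le _ _ _ _).trans (add_le_add le_rfl (dist_sum_sum_le _ _ _))
    _ ≤ K₀ * dist x y + ∑ i, R * K i * dist x y :=
        add_le_add (hK₀.dist_le_mul x y) (Finset.sum_le_sum fun i _ => hsmul i)
    _ = (K₀ + R * ∑ i, (K i : ℝ)) * dist x y := by
        rw [← Finset.sum_mul, ← Finset.mul_sum]; ring

theorem intervalIntegrable_field_comp {v : ℝ → Fin m → ℝ} (hv : v ∈ S.ctrl)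
    {H : ℝ → Fin d → ℝ} (hH : Continuous H) (a b : ℝ) :
    IntervalIntegrable (fun s => S.field v s (H s)) volume a b := by
  obtain ⟨K₀, hK₀⟩ := S.lip0
  choose K hK using S.lip
  obtain ⟨R, -, hR⟩ := S.exists_norm_le_of_mem_ctrl
  have hf₀ := hK₀.continuous
  have hf := fun i => (hK i).continuous
  have hmeas : Measurable fun s => S.field v s (H s) := by
    have := hv.1
    unfold field
    fun_prop
  refine IntervalIntegrable.mono_fun' (g := fun s => ‖S.f0 (H s)‖ + ∑ i, R * ‖S.f i (H s)‖)
    (Continuous.intervalIntegrable (by fun_prop) a b) hmeas.aestronglyMeasurable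
    (Filter.Eventually.of_forall fun s => ?_)
  refine (norm_add_le _ _).trans (add_le_add le_rfl ((norm_sum_le _ _).trans ?_))
  refine Finset.sum_le_sum fun i _ => ?_
  rw [norm_smul]
  exact mul_le_mul_of_nonneg_right (hR v hv s i) (norm_nonneg _)

theorem dist_φ_le_add_integral {L : ℝ}
    (hL : ∀ v ∈ S.ctrl, ∀ s x y, dist (S.field v s x) (S.field v s y) ≤ L * dist x y)
    {v : ℝ → Fin m → ℝ} (hv : v ∈ S.ctrl) (x y : Fin d → ℝ) {t : ℝ} (ht : 0 ≤ t) :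
    dist (S.φ x v t) (S.φ y v t) ≤
      dist x y + ∫ s in (0:ℝ)..t, L * dist (S.φ x v s) (S.φ y v s) := by
  have hx := S.intervalIntegrable_field_comp hv (S.φ_cont x v) 0 t
  have hy := S.intervalIntegrable_field_comp hv (S.φ_cont y v) 0 t
  have hdiff : S.φ x v t - S.φ y v t = (x - y) +
      ∫ s in (0:ℝ)..t, (S.field v s (S.φ x v s) - S.field v s (S.φ y v s)) := by
    rw [intervalIntegral.integral_sub hx hy, S.φ_eq_add_integral hv x ht,
      S.φ_eq_add_integral hv y ht]
    abel
  have hint : ‖∫ s in (0:ℝ)..t, (S.field v s (S.φ x v s) - S.field v s (S.φ y v s))‖ ≤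
      ∫ s in (0:ℝ)..t, L * dist (S.φ x v s) (S.φ y v s) :=
    intervalIntegral.norm_integral_le_of_norm_le ht
      (Filter.Eventually.of_forall fun s _ => by rw [← dist_eq_norm]; exact hL v hv s _ _)
      ((continuous_const.mul ((S.φ_cont x v).dist (S.φ_cont y v))).intervalIntegrable 0 t)
  rw [dist_eq_norm, hdiff, dist_eq_norm x y]
  exact (norm_add_le _ _).trans (add_le_add le_rfl hint)

theorem exists_dist_φ_le :
    ∃ L, 0 ≤ L ∧ ∀ v ∈ S.ctrl, ∀ x y t, 0 ≤ t →
      dist (S.φ x v t) (S.φ y v t) ≤ dist x y * Real.exp (L * t) := by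
  obtain ⟨L, hL0, hL⟩ := S.exists_dist_field_le
  refine ⟨L, hL0, fun v hv x y t ht => ?_⟩
  have hcont : Continuous fun s => dist (S.φ x v s) (S.φ y v s) :=
    (S.φ_cont x v).dist (S.φ_cont y v)
  exact le_mul_exp_of_le_add_integral hcont hL0 ht fun s hs =>
    S.dist_φ_le_add_integral hL hv x y hs.1

theorem continuous_φ_left {v : ℝ → Fin m → ℝ} (hv : v ∈ S.ctrl) {t : ℝ} (ht : 0 ≤ t) :
    Continuous fun x => S.φ x v t := by
  obtain ⟨L, -, hL⟩ := S.exists_dist_φ_le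
  exact (LipschitzWith.of_dist_le' fun x y => by
    rw [mul_comm]; exact hL v hv x y t ht).continuous

variable {S}

theorem reachLe_subset_reach (T : ℝ) (x : Fin d → ℝ) : S.reachLe T x ⊆ S.reach x :=
  fun _ ⟨v, hv, t, ht, hy⟩ => ⟨v, hv, t, ht.1, hy⟩

theorem locAccAt.nonempty_interior_reachLe {x : Fin d → ℝ} (hx : S.locAccAt x) {T : ℝ}
    (hT : 0 < T) : (interior (S.reachLe T x)).Nonempty := by
  simpa using (hx T hT univ Filter.univ_mem).1

namespace isInvControlSet

variable {C C' : Set (Fin d → ℝ)}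

theorem reach_subset_closure (hC : S.isInvControlSet C) {x : Fin d → ℝ} (hx : x ∈ C) :
    S.reach x ⊆ closure C :=
  (hC.2 x hx).symm ▸ subset_closure

theorem reach_subset_closure_of_mem_closure (hC : S.isInvControlSet C) {x : Fin d → ℝ}
    (hx : x ∈ closure C) : S.reach x ⊆ closure C := by
  rintro _ ⟨v, hv, t, ht, rfl⟩
  exact closure_closure (s := C) ▸
    map_mem_closure (f := fun y => S.φ y v t) (S.continuous_φ_left hv ht) hx
    fun y hy => hC.reach_subset_closure hy ⟨v, hv, t, ht, rfl⟩

theorem closure_subset_of_mem_closure (hC : S.isInvControlSet C) (hC' : S.isInvControlSet C')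
    {x : Fin d → ℝ} (hxC : x ∈ C) (hxC' : x ∈ closure C') : closure C ⊆ closure C' := by
  rw [hC.2 x hxC]
  exact closure_minimal (hC'.reach_subset_closure_of_mem_closure hxC') isClosed_closure

theorem eq_of_closure_eq (hC : S.isInvControlSet C) (hC' : S.isInvControlSet C')
    (h : closure C = closure C') : C = C' := by
  have hunion : S.controlSetProps (C ∪ C') := by
    constructor
    · rintro x (hx | hx)
      · obtain ⟨v, hv, hvC⟩ := hC.1.2.1.1 x hx
        exact ⟨v, hv, fun t ht => Or.inl (hvC t ht)⟩
      · obtain ⟨v, hv, hvC'⟩ := hC'.1.2.1.1 x hx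
        exact ⟨v, hv, fun t ht => Or.inr (hvC' t ht)⟩
    · rintro x (hx | hx)
      · rw [← hC.2 x hx]
        exact union_subset subset_closure (h ▸ subset_closure)
      · rw [← hC'.2 x hx]
        exact union_subset (h ▸ subset_closure) subset_closure
  exact (hC.1.2.2 _ subset_union_left hunion).symm.trans (hC'.1.2.2 _ subset_union_right hunion)

theorem eq_of_mem_closure_of_locAccAt (hC : S.isInvControlSet C) (hC' : S.isInvControlSet C')
    {p : Fin d → ℝ} (hp : p ∈ closure C) (hp' : p ∈ closure C') (hpa : S.locAccAt p) :
    C = C' := by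
  set W := interior (S.reachLe 1 p)
  have hW : W ⊆ S.reach p := interior_subset.trans (reachLe_subset_reach 1 p)
  obtain ⟨w, hw⟩ := hpa.nonempty_interior_reachLe one_pos
  obtain ⟨a, haW, haC⟩ :=
    mem_closure_iff.1 (hC.reach_subset_closure_of_mem_closure hp (hW hw)) W isOpen_interior hw
  obtain ⟨b, hbW, hbC'⟩ :=
    mem_closure_iff.1 (hC'.reach_subset_closure_of_mem_closure hp' (hW hw)) W isOpen_interior hw
  refine hC.eq_of_closure_eq hC' (subset_antisymm ?_ ?_)
  · exact hC.closure_subset_of_mem_closure hC' haC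
      (hC'.reach_subset_closure_of_mem_closure hp' (hW haW))
  · exact hC'.closure_subset_of_mem_closure hC hbC'
      (hC.reach_subset_closure_of_mem_closure hp (hW hbW))

end isInvControlSet

theorem exists_locAccAt_mem_closure_of_inter_nhds {M : Set (Fin d → ℝ)} (hM : S.posInv M)
    (hacc : S.locAccOn M) {c : Fin d → ℝ} (hc : c ∈ M) :
    ∃ b, S.locAccAt b ∧ ∃ U ∈ 𝓝 c,
      ∀ C, S.isInvControlSet C → (C ∩ U).Nonempty → b ∈ closure C := by
  obtain ⟨b, hb⟩ := (hacc c hc).nonempty_interior_reachLe one_pos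
  have hbM : b ∈ M := by
    obtain ⟨w, hw, t, ht, rfl⟩ := interior_subset hb
    exact hM c hc w hw t ht.1
  obtain ⟨u, hu, huc⟩ := (hacc b hbM 1 one_pos _ (isOpen_interior.mem_nhds hb)).2
  obtain ⟨w, hw, s, hs, rfl⟩ := interior_subset huc
  refine ⟨b, hacc b hbM, (fun x => S.φ x w s) ⁻¹' interior (S.contrLe 1 b),
    (S.continuous_φ_left hw hs.1).continuousAt.preimage_mem_nhds (isOpen_interior.mem_nhds hu),
    ?_⟩
  rintro C hC ⟨x, hxC, hxU⟩
  obtain ⟨v, hv, r, hr, hrb⟩ := interior_subset hxU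
  exact hC.reach_subset_closure_of_mem_closure
    (hC.reach_subset_closure hxC ⟨w, hw, s, hs.1, rfl⟩) ⟨v, hv, r, hr.1, hrb⟩

theorem exists_nhds_subsingleton_isInvControlSet {M : Set (Fin d → ℝ)} (hM : S.posInv M)
    (hacc : S.locAccOn M) {c : Fin d → ℝ} (hc : c ∈ M) :
    ∃ U ∈ 𝓝 c, {C | S.isInvControlSet C ∧ (C ∩ U).Nonempty}.Subsingleton := by
  obtain ⟨b, hb, U, hU, hbC⟩ := exists_locAccAt_mem_closure_of_inter_nhds hM hacc hc
  exact ⟨U, hU, fun C ⟨hC, hCU⟩ C' ⟨hC', hC'U⟩ =>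
    hC.eq_of_mem_closure_of_locAccAt hC' (hbC C hC hCU) (hbC C' hC' hC'U) hb⟩

end CAS

/-- If the system is locally accessible on a positively invariant
set `M` and `K ⊆ M` is compact, then only finitely many invariant control sets in
`M` intersect `K`. -/
theorem stmt8 {d m : ℕ} (S : CAS d m) (M K : Set (Fin d → ℝ))
    (hM : S.posInv M) (hacc : S.locAccOn M) (hK : IsCompact K) (hKM : K ⊆ M) :
    {C : Set (Fin d → ℝ) | S.isInvControlSet C ∧ C ⊆ M ∧ (C ∩ K).Nonempty}.Finite := by
  choose! U hU hsub using fun c (hc : c ∈ M) =>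
    CAS.exists_nhds_subsingleton_isInvControlSet hM hacc hc
  obtain ⟨t, htK, hKt⟩ := hK.elim_nhds_subcover U fun c hc => hU c (hKM hc)
  refine (t.finite_toSet.biUnion fun c hc => (hsub c (hKM (htK c hc))).finite).subset ?_
  rintro C ⟨hC, -, x, hxC, hxK⟩
  obtain ⟨c, hct, hxU⟩ := mem_iUnion₂.1 (hKt hxK)
  exact mem_biUnion hct ⟨hC, x, hxC, hxU⟩
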